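/- Let (X,d) be a nonempty locally finite ultrametric space. Then the following statements are equivalent: (1) (X,d) belongs to the class UGVL; (2) every open ball of (X,d) is a centered sphere of (X,d); (3) for every open ball B of (X,d) with at least two points there exists a point c ∈ B such that d(x,c) = diam B for every x ∈ B with x ≠ c. -/

import Mathlib

/-- `d` is an ultrametric on `X`: a nonnegative, symmetric function vanishing
exactly on the diagonal and satisfying the strong triangle inequality. -/
def IsUltrametricOn {X : Type*} (d : X → X → ℝ) : Prop :=
  (∀ x y, 0 ≤ d x y) ∧ (∀ x y, d x y = d y x) ∧
  (∀ x y, d x y = 0 ↔ x = y) ∧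
  (∀ x y z, d x y ≤ max (d x z) (d z y))

/-- `B` is an open ball of the space `(X, d)`. -/
def IsOpenBallOf {X : Type*} (d : X → X → ℝ) (B : Set X) : Prop :=
  ∃ c : X, ∃ r : ℝ, 0 < r ∧ B = {x | d c x < r}

/-- `C` is a centered sphere of the space `(X, d)`. -/
def IsCenteredSphereOf {X : Type*} (d : X → X → ℝ) (C : Set X) : Prop :=
  ∃ c ∈ C, ∃ r : ℝ, 0 ≤ r ∧ C = {x | d x c = r} ∪ {c}

/-- The diameter `sup {d x y : x, y ∈ A}` of a subset `A` of `(X, d)`. -/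
noncomputable def setDiam {X : Type*} (d : X → X → ℝ) (A : Set X) : ℝ :=
  sSup {r | ∃ x ∈ A, ∃ y ∈ A, r = d x y}

/-- A space is locally finite if all of its open balls are finite sets. -/
def IsLocallyFiniteOn {X : Type*} (d : X → X → ℝ) : Prop :=
  ∀ B : Set X, IsOpenBallOf d B → B.Finite

/-- The maximum of the (nonnegative) labels of the vertices of a walk `p`. -/
def walkMax {X : Type*} {T : SimpleGraph X} (l : X → ℝ) {u v : X} (p : T.Walk u v) : ℝ :=
  (p.support.map l).foldr max 0

/-- The function `d` is generated by the tree `T` with nonnegative vertex labeling `l`,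
i.e. `d u u = 0` and, for `u ≠ v`, `d u v` is the maximum of the labels of the vertices
on the (unique) path joining `u` and `v` in `T`. -/
def GeneratedBy {X : Type*} (d : X → X → ℝ) (T : SimpleGraph X) (l : X → ℝ) : Prop :=
  T.IsTree ∧ (∀ x, 0 ≤ l x) ∧ (∀ u, d u u = 0) ∧
  ∀ u v : X, u ≠ v → ∀ p : T.Walk u v, p.IsPath → d u v = walkMax l p

/-- `(X, d)` belongs to the class UGVL: it is generated by some labeled tree. -/
def IsUGVL {X : Type*} (d : X → X → ℝ) : Prop :=
  ∃ (T : SimpleGraph X) (l : X → ℝ), GeneratedBy d T l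

/-!
In a space generated by a labelled tree, the vertex of largest label on the path between two
points realising the diameter of a ball is a center of that ball: every other point of the ball
is at distance exactly the diameter from it. A center `c` of a ball `B` exhibits `B` as the
sphere of radius `diam B` about `c` together with `c`, and conversely.

For the converse construction fix a center `ctr B` of every ball. Call a ball containing `x`
whose center is not `x` an away-ball of `x`; the parent of `x` is the center of its smallest
away-ball, and the tree joins every point to its parent. Passing to the parent strictly shrinks
the family of away-balls, so the graph has no cycle, and following parents from a point of a
ball `B` reaches `ctr B` without leaving `B`; hence the path between `u` and `v` stays in the
closed ball of radius `d u v` about `u`. Label every point by its distance to the nearest other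
point. Labels inside that ball are at most `d u v`, and every edge is no longer than the larger
label of its ends, so by the strong triangle inequality `d u v` is the largest label on the path.
-/

namespace SimpleGraph

variable {V α : Type*} [Preorder α]

def parentGraph (p : V → V) : SimpleGraph V := fromRel fun x y => p x = y

theorem isAcyclic_parentGraph {p : V → V} (φ : V → α) (hφ : ∀ x, p x ≠ x → φ (p x) < φ x) :
    (parentGraph p).IsAcyclic := by
  classical
  intro v c hc
  obtain ⟨u, hu_mem, hu_max⟩ :=
    c.support.toFinset.exists_maximalFor φ ⟨v, by simp⟩
  have hu : u ∈ c.support := List.mem_toFinset.1 hu_mem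
  -- at a vertex of maximal potential both cycle edges must lead to its parent
  have hnbr : c.toSubgraph.neighborSet u ⊆ {p u} := by
    intro w hw
    have hw_mem : w ∈ c.support := c.mem_verts_toSubgraph.1 (c.toSubgraph.edge_vert hw.symm)
    obtain ⟨hne, h | h⟩ := (fromRel_adj _ _ _).1 hw.adj_sub
    · exact h.symm
    · have hlt := hφ w (h ▸ hne)
      rw [h] at hlt
      exact absurd (hu_max (List.mem_toFinset.2 hw_mem) hlt.le) (not_le_of_gt hlt)
  have h2 := hc.ncard_neighborSet_toSubgraph_eq_two hu
  have h1 := Set.ncard_le_ncard hnbr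
  rw [Set.ncard_singleton] at h1
  omega

theorem exists_walk_parentGraph {p : V → V} (φ : V → α) (hφ : ∀ x, p x ≠ x → φ (p x) < φ x)
    {S : Set V} (hS : S.Finite) {t : V} (hstep : ∀ y ∈ S, y ≠ t → p y ≠ y ∧ p y ∈ S)
    {x : V} (hx : x ∈ S) : ∃ w : (parentGraph p).Walk x t, ∀ z ∈ w.support, z ∈ S := by
  set R := {y | ∃ w : (parentGraph p).Walk x y, ∀ z ∈ w.support, z ∈ S}
  have hRS : R ⊆ S := fun y ⟨w, hw⟩ => hw y w.end_mem_support
  obtain ⟨y, ⟨w, hw⟩, hy_min⟩ :=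
    (hS.subset hRS).exists_minimalFor φ R ⟨x, .nil, by simpa using hx⟩
  by_cases hyt : y = t
  · exact hyt ▸ ⟨w, hw⟩
  obtain ⟨hne, hpS⟩ := hstep y (hRS ⟨w, hw⟩) hyt
  have hadj : (parentGraph p).Adj y (p y) := (fromRel_adj _ _ _).2 ⟨hne.symm, Or.inl rfl⟩
  have hpR : p y ∈ R := ⟨w.concat hadj, by
    intro z hz
    rw [Walk.support_concat, List.mem_append, List.mem_singleton] at hz
    exact hz.elim (hw z) (· ▸ hpS)⟩
  exact absurd (hy_min hpR (hφ y hne).le) (not_le_of_gt (hφ y hne))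

end SimpleGraph

section WalkMax

variable {X : Type*} {T : SimpleGraph X} {l : X → ℝ}

theorem List.foldr_max_zero_le_iff {L : List ℝ} {c : ℝ} :
    L.foldr max 0 ≤ c ↔ 0 ≤ c ∧ ∀ a ∈ L, a ≤ c := by
  induction L with
  | nil => simp
  | cons a L ih => simp [ih, and_left_comm]

theorem walkMax_le_iff {u v : X} {p : T.Walk u v} {c : ℝ} :
    walkMax l p ≤ c ↔ 0 ≤ c ∧ ∀ z ∈ p.support, l z ≤ c := by
  simp [walkMax, List.foldr_max_zero_le_iff]

theorem le_walkMax {u v z : X} {p : T.Walk u v} (hz : z ∈ p.support) : l z ≤ walkMax l p :=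
  (walkMax_le_iff.1 le_rfl).2 z hz

theorem walkMax_nonneg {u v : X} (p : T.Walk u v) : 0 ≤ walkMax l p :=
  (walkMax_le_iff.1 le_rfl).1

theorem exists_walkMax_eq (hl : ∀ x, 0 ≤ l x) {u v : X} (p : T.Walk u v) :
    ∃ z ∈ p.support, walkMax l p = l z := by
  induction p with
  | @nil w => exact ⟨w, by simp, by simp [walkMax, hl]⟩
  | cons h q ih =>
    obtain ⟨z, hz, hq⟩ := ih
    rcases max_choice (l _) (walkMax l q) with hmax | hmax
    · exact ⟨_, q.support.mem_cons_self .., by simpa [walkMax] using hmax⟩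
    · exact ⟨z, List.mem_cons_of_mem _ hz, by simp_all [walkMax]⟩

end WalkMax

namespace IsUltrametricOn

variable {X : Type*} {d : X → X → ℝ}

theorem nonneg (hd : IsUltrametricOn d) (x y : X) : 0 ≤ d x y := hd.1 x y

theorem symm (hd : IsUltrametricOn d) (x y : X) : d x y = d y x := hd.2.1 x y

theorem eq_zero_iff (hd : IsUltrametricOn d) {x y : X} : d x y = 0 ↔ x = y := hd.2.2.1 x y

theorem self_eq_zero (hd : IsUltrametricOn d) (x : X) : d x x = 0 := hd.eq_zero_iff.2 rfl

theorem le_max (hd : IsUltrametricOn d) (x y z : X) : d x y ≤ max (d x z) (d z y) :=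
  hd.2.2.2 x y z

theorem pos_of_ne (hd : IsUltrametricOn d) {x y : X} (h : x ≠ y) : 0 < d x y :=
  (hd.nonneg x y).lt_of_ne fun h0 => h (hd.eq_zero_iff.1 h0.symm)

end IsUltrametricOn

section Balls

variable {X : Type*} {d : X → X → ℝ} {A B B' : Set X}

theorem finite_setOf_dist (hA : A.Finite) : {r | ∃ x ∈ A, ∃ y ∈ A, r = d x y}.Finite :=
  (hA.image2 d hA).subset fun _ ⟨x, hx, y, hy, hr⟩ => ⟨x, hx, y, hy, hr.symm⟩

theorem le_setDiam (hA : A.Finite) {x y : X} (hx : x ∈ A) (hy : y ∈ A) :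
    d x y ≤ setDiam d A :=
  le_csSup (finite_setOf_dist hA).bddAbove ⟨x, hx, y, hy, rfl⟩

theorem setDiam_le (hA : A.Nonempty) {c : ℝ} (h : ∀ x ∈ A, ∀ y ∈ A, d x y ≤ c) :
    setDiam d A ≤ c :=
  let ⟨x, hx⟩ := hA
  csSup_le ⟨d x x, x, hx, x, hx, rfl⟩ fun _ ⟨x, hx, y, hy, hr⟩ => hr ▸ h x hx y hy

theorem exists_dist_eq_setDiam (hA : A.Finite) (hne : A.Nonempty) :
    ∃ x ∈ A, ∃ y ∈ A, d x y = setDiam d A := by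
  obtain ⟨x, hx⟩ := hne
  have hdists : {r | ∃ x ∈ A, ∃ y ∈ A, r = d x y}.Nonempty := ⟨d x x, x, hx, x, hx, rfl⟩
  obtain ⟨x, hx, y, hy, h⟩ := hdists.csSup_mem (finite_setOf_dist hA)
  exact ⟨x, hx, y, hy, h.symm⟩

theorem IsOpenBallOf.nonempty (hd : IsUltrametricOn d) (hB : IsOpenBallOf d B) : B.Nonempty := by
  obtain ⟨c, r, hr, rfl⟩ := hB
  exact ⟨c, by simpa [hd.self_eq_zero] using hr⟩

theorem setOf_dist_lt_eq_of_lt (hd : IsUltrametricOn d) {c z : X} {r : ℝ} (hz : d c z < r) :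
    {y | d c y < r} = {y | d z y < r} := by
  ext y
  constructor
  · exact fun hy => (hd.le_max z y c).trans_lt (max_lt (hd.symm z c ▸ hz) hy)
  · exact fun hy => (hd.le_max c y z).trans_lt (max_lt hz hy)

theorem IsOpenBallOf.subset_or_subset (hd : IsUltrametricOn d) (hB : IsOpenBallOf d B)
    (hB' : IsOpenBallOf d B') {z : X} (hz : z ∈ B) (hz' : z ∈ B') : B ⊆ B' ∨ B' ⊆ B := by
  obtain ⟨c, r, -, rfl⟩ := hB
  obtain ⟨c', r', -, rfl⟩ := hB'
  rw [setOf_dist_lt_eq_of_lt hd hz, setOf_dist_lt_eq_of_lt hd hz']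
  rcases le_total r r' with h | h
  · exact Or.inl fun y hy => lt_of_lt_of_le hy h
  · exact Or.inr fun y hy => lt_of_lt_of_le hy h

theorem IsOpenBallOf.mem_of_dist_le_setDiam (hd : IsUltrametricOn d) (hlf : IsLocallyFiniteOn d)
    (hB : IsOpenBallOf d B) {c x : X} (hc : c ∈ B) (hx : d c x ≤ setDiam d B) : x ∈ B := by
  obtain ⟨p, hp, q, hq, hpq⟩ := exists_dist_eq_setDiam (d := d) (hlf B hB) ⟨c, hc⟩
  obtain ⟨o, r, -, rfl⟩ := hB
  have hdiam : setDiam d {y | d o y < r} < r :=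
    hpq ▸ (hd.le_max p q o).trans_lt (max_lt (hd.symm p o ▸ hp) hq)
  exact (hd.le_max o x c).trans_lt (max_lt hc (hx.trans_lt hdiam))

theorem isOpenBallOf_setOf_dist_le (hlf : IsLocallyFiniteOn d) (x : X)
    {r : ℝ} (hr : 0 ≤ r) : IsOpenBallOf d {y | d x y ≤ r} := by
  classical
  have hfin := hlf _ ⟨x, r + 1, by linarith, rfl⟩
  -- the new radius is the least distance from `x` that exceeds `r`, capped at `r + 1`
  set S : Finset ℝ := insert (r + 1) ((hfin.toFinset.image (d x)).filter (r < ·))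
  have hS : S.Nonempty := Finset.insert_nonempty _ _
  have hrS : r < S.min' hS := (Finset.lt_min'_iff _ _).2 fun s hs => by
    rcases Finset.mem_insert.1 hs with rfl | hs
    · linarith
    · exact (Finset.mem_filter.1 hs).2
  refine ⟨x, S.min' hS, hr.trans_lt hrS, Set.ext fun y => ⟨fun hy => lt_of_le_of_lt hy hrS, ?_⟩⟩
  intro hy
  by_contra hry
  have hy1 : d x y < r + 1 := hy.trans_le (S.min'_le _ (Finset.mem_insert_self _ _))
  have hyS : d x y ∈ S := Finset.mem_insert_of_mem <| Finset.mem_filter.2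
    ⟨Finset.mem_image.2 ⟨y, hfin.mem_toFinset.2 hy1, rfl⟩, lt_of_not_ge hry⟩
  exact (S.min'_le _ hyS).not_gt hy

end Balls

section Centers

variable {X : Type*} {d : X → X → ℝ} {B : Set X} {c : X}

def IsCenterOf (d : X → X → ℝ) (B : Set X) (c : X) : Prop :=
  c ∈ B ∧ ∀ x ∈ B, x ≠ c → d x c = setDiam d B

theorem IsOpenBallOf.exists_isCenterOf (hd : IsUltrametricOn d) (hB : IsOpenBallOf d B)
    (h : (∃ a ∈ B, ∃ b ∈ B, a ≠ b) → ∃ c, IsCenterOf d B c) : ∃ c, IsCenterOf d B c := by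
  by_cases htwo : ∃ a ∈ B, ∃ b ∈ B, a ≠ b
  · exact h htwo
  · obtain ⟨c, hc⟩ := hB.nonempty hd
    exact ⟨c, hc, fun x hx hxc => absurd ⟨x, hx, c, hc, hxc⟩ htwo⟩

theorem IsCenterOf.isCenteredSphereOf (hd : IsUltrametricOn d) (hlf : IsLocallyFiniteOn d)
    (hB : IsOpenBallOf d B) (hc : IsCenterOf d B c) : IsCenteredSphereOf d B := by
  refine ⟨c, hc.1, setDiam d B, ?_, Set.ext fun x => ⟨fun hx => ?_, fun hx => ?_⟩⟩
  · simpa [hd.self_eq_zero] using le_setDiam (d := d) (hlf B hB) hc.1 hc.1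
  · by_cases hxc : x = c
    · exact Or.inr hxc
    · exact Or.inl (hc.2 x hx hxc)
  · rcases hx with hx | rfl
    · exact hB.mem_of_dist_le_setDiam hd hlf hc.1 (hd.symm c x ▸ hx.le)
    · exact hc.1

theorem IsCenteredSphereOf.exists_isCenterOf (hd : IsUltrametricOn d)
    (hlf : IsLocallyFiniteOn d) (hB : IsOpenBallOf d B) (hS : IsCenteredSphereOf d B)
    (htwo : ∃ a ∈ B, ∃ b ∈ B, a ≠ b) : ∃ c, IsCenterOf d B c := by
  obtain ⟨c, hc, r, hr, rfl⟩ := hS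
  have hsphere : ∀ x ∈ {x | d x c = r} ∪ {c}, x ≠ c → d x c = r := fun x hx hxc =>
    hx.resolve_right hxc
  have hle : ∀ x ∈ {x | d x c = r} ∪ {c}, d x c ≤ r := fun x hx => by
    by_cases hxc : x = c
    · rw [hxc, hd.self_eq_zero]; exact hr
    · exact (hsphere x hx hxc).le
  have hdiam : setDiam d ({x | d x c = r} ∪ {c}) = r := by
    refine le_antisymm (setDiam_le ⟨c, hc⟩ fun x hx y hy => ?_) ?_
    · exact (hd.le_max x y c).trans (max_le (hle x hx) (hd.symm c y ▸ hle y hy))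
    · obtain ⟨a, ha, b, hb, hab⟩ := htwo
      obtain ⟨p, hp, hpc⟩ : ∃ p ∈ {x | d x c = r} ∪ {c}, p ≠ c := by
        by_cases hac : a = c
        · exact ⟨b, hb, hac ▸ hab.symm⟩
        · exact ⟨a, ha, hac⟩
      exact (hsphere p hp hpc).symm.trans_le (le_setDiam (hlf _ hB) hp hc)
  exact ⟨c, hc, fun x hx hxc => (hsphere x hx hxc).trans hdiam.symm⟩

noncomputable def nearestDist (d : X → X → ℝ) (x : X) : ℝ := sInf (d x '' {y | y ≠ x})

theorem nearestDist_nonneg (hd : IsUltrametricOn d) (x : X) : 0 ≤ nearestDist d x :=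
  Real.sInf_nonneg fun _ ⟨y, _, hy⟩ => hy ▸ hd.nonneg x y

theorem nearestDist_le (hd : IsUltrametricOn d) {x y : X} (hy : y ≠ x) :
    nearestDist d x ≤ d x y :=
  csInf_le ⟨0, fun _ ⟨z, _, hz⟩ => hz ▸ hd.nonneg x z⟩ ⟨y, hy, rfl⟩

theorem IsCenterOf.dist_le_nearestDist (hd : IsUltrametricOn d) (hlf : IsLocallyFiniteOn d)
    (hB : IsOpenBallOf d B) (hc : IsCenterOf d B c) {x : X} (hx : x ∈ B) (hxc : x ≠ c) :
    d x c ≤ nearestDist d c := by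
  refine le_csInf ⟨d c x, x, hxc, rfl⟩ ?_
  rintro _ ⟨y, hyc, rfl⟩
  rw [hc.2 x hx hxc]
  by_contra! hy
  have hyc' := hc.2 y (hB.mem_of_dist_le_setDiam hd hlf hc.1 hy.le) hyc
  rw [hd.symm c y, hyc'] at hy
  exact lt_irrefl _ hy

end Centers

namespace GeneratedBy

variable {X : Type*} {d : X → X → ℝ} {T : SimpleGraph X} {l : X → ℝ}

theorem label_le_dist (hG : GeneratedBy d T l) {x w : X} (hxw : x ≠ w) : l w ≤ d x w := by
  obtain ⟨p, hp, -⟩ := hG.1.existsUnique_path x w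
  exact hG.2.2.2 x w hxw p hp ▸ le_walkMax p.end_mem_support

theorem exists_label_eq_dist (hG : GeneratedBy d T l) {u v : X} (huv : u ≠ v) :
    ∃ w, l w = d u v ∧ d u w ≤ d u v := by
  classical
  obtain ⟨p, hp, -⟩ := hG.1.existsUnique_path u v
  have hpuv := hG.2.2.2 u v huv p hp
  obtain ⟨w, hw, hlw⟩ := exists_walkMax_eq hG.2.1 p
  refine ⟨w, hlw ▸ hpuv.symm, ?_⟩
  by_cases hwu : u = w
  · rw [← hwu, hG.2.2.1, hpuv]
    exact walkMax_nonneg p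
  · rw [hG.2.2.2 u w hwu _ (hp.takeUntil hw), hpuv]
    exact walkMax_le_iff.2 ⟨walkMax_nonneg p, fun z hz =>
      le_walkMax (p.support_takeUntil_subset_support hw hz)⟩

theorem exists_isCenterOf (hG : GeneratedBy d T l) (hd : IsUltrametricOn d)
    (hlf : IsLocallyFiniteOn d) {B : Set X} (hB : IsOpenBallOf d B)
    (htwo : ∃ a ∈ B, ∃ b ∈ B, a ≠ b) : ∃ c, IsCenterOf d B c := by
  obtain ⟨a, ha, b, hb, hab⟩ := htwo
  obtain ⟨p, hp, q, hq, hpq⟩ := exists_dist_eq_setDiam (d := d) (hlf B hB) ⟨a, ha⟩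
  have hdiam_pos : 0 < setDiam d B := (hd.pos_of_ne hab).trans_le (le_setDiam (hlf B hB) ha hb)
  have hpq_ne : p ≠ q := fun h => by rw [h, hd.self_eq_zero] at hpq; exact hdiam_pos.ne hpq
  obtain ⟨w, hlw, hpw⟩ := hG.exists_label_eq_dist hpq_ne
  have hwB : w ∈ B := hB.mem_of_dist_le_setDiam hd hlf hp (hpq ▸ hpw)
  refine ⟨w, hwB, fun x hx hxw => le_antisymm (le_setDiam (hlf B hB) hx hwB) ?_⟩
  exact hpq ▸ hlw ▸ hG.label_le_dist hxw

end GeneratedBy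

section Criterion

variable {X : Type*} {d : X → X → ℝ} {T : SimpleGraph X} {l : X → ℝ}

theorem dist_le_walkMax (hd : IsUltrametricOn d)
    (hadj : ∀ x y, T.Adj x y → d x y ≤ max (l x) (l y)) {u v : X} (p : T.Walk u v) :
    d u v ≤ walkMax l p := by
  induction p with
  | nil => exact hd.self_eq_zero _ ▸ walkMax_nonneg _
  | @cons u w v h q ih =>
    have hw : l w ≤ walkMax l q := le_walkMax q.start_mem_support
    have hcons : walkMax l (.cons h q) = max (l u) (walkMax l q) := by simp [walkMax]
    rw [hcons]
    calc d u v ≤ max (d u w) (d w v) := hd.le_max u v w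
      _ ≤ max (max (l u) (l w)) (walkMax l q) := max_le_max (hadj u w h) ih
      _ ≤ max (l u) (walkMax l q) := by
        rw [max_assoc, max_eq_right hw]

theorem generatedBy_of_forall_exists_walk (hd : IsUltrametricOn d) (hT : T.IsTree)
    (hl : ∀ x, 0 ≤ l x) (hl_le : ∀ x y, y ≠ x → l x ≤ d x y)
    (hadj : ∀ x y, T.Adj x y → d x y ≤ max (l x) (l y))
    (hwalk : ∀ u v, ∃ w : T.Walk u v, ∀ z ∈ w.support, d u z ≤ d u v) :
    GeneratedBy d T l := by
  classical
  refine ⟨hT, hl, hd.self_eq_zero, fun u v huv p hp => ?_⟩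
  obtain ⟨w, hw⟩ := hwalk u v
  obtain rfl : p = w.bypass := (hT.existsUnique_path u v).unique hp w.bypass_isPath
  refine le_antisymm (dist_le_walkMax hd hadj _) (walkMax_le_iff.2 ⟨hd.nonneg u v, fun z hz => ?_⟩)
  by_cases hzu : z = u
  · exact hzu ▸ hl_le u v (Ne.symm huv)
  · exact (hl_le z u (Ne.symm hzu)).trans
      (hd.symm z u ▸ hw z (w.support_bypass_subset_support hz))

end Criterion

structure CenterChoice {X : Type*} (d : X → X → ℝ) where
  ultrametric : IsUltrametricOn d
  locallyFinite : IsLocallyFiniteOn d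
  ctr : Set X → X
  isCenterOf_ctr : ∀ ⦃B⦄, IsOpenBallOf d B → IsCenterOf d B (ctr B)

namespace CenterChoice

variable {X : Type*} {d : X → X → ℝ} (C : CenterChoice d) {x : X} {B B' : Set X}

def awayBalls (x : X) : Set (Set X) := {B | IsOpenBallOf d B ∧ x ∈ B ∧ C.ctr B ≠ x}

theorem mem_awayBalls_of_subset (hB : B ∈ C.awayBalls x) (hB' : IsOpenBallOf d B')
    (hBB' : B ⊆ B') : B' ∈ C.awayBalls x := by
  obtain ⟨hBall, hx, hcx⟩ := hB
  refine ⟨hB', hBB' hx, fun hc'x => hcx ?_⟩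
  have hc := C.isCenterOf_ctr hBall
  have hc' := C.isCenterOf_ctr hB'
  -- `d x (ctr B)` is the diameter of both balls, so `B'` lies in the ball of that radius around `x`
  have hdiam : setDiam d B' = setDiam d B := by
    rw [← hc'.2 _ (hBB' hc.1) (hc'x ▸ hcx), ← hc.2 x hx (Ne.symm hcx), hc'x,
      C.ultrametric.symm]
  have hB'B : B' ⊆ B := fun y hy => hBall.mem_of_dist_le_setDiam C.ultrametric C.locallyFinite
    hx (hdiam ▸ le_setDiam (C.locallyFinite B' hB') (hc'x ▸ hc'.1) hy)
  rw [subset_antisymm hBB' hB'B, hc'x]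

theorem exists_isLeast_awayBalls (h : (C.awayBalls x).Nonempty) :
    ∃ B, IsLeast (C.awayBalls x) B := by
  obtain ⟨B₀, hB₀⟩ := h
  have hfin : {B ∈ C.awayBalls x | B ⊆ B₀}.Finite :=
    (C.locallyFinite B₀ hB₀.1).finite_subsets.subset fun _ hB => hB.2
  obtain ⟨B, ⟨hB, hBB₀⟩, hmin⟩ := hfin.exists_minimal ⟨B₀, hB₀, subset_rfl⟩
  refine ⟨B, hB, fun B' hB' => ?_⟩
  rcases hB.1.subset_or_subset C.ultrametric hB'.1 hB.2.1 hB'.2.1 with h | h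
  · exact h
  · exact hmin ⟨hB', h.trans hBB₀⟩ h

open Classical in
noncomputable def parent (x : X) : X :=
  if h : ∃ B, IsLeast (C.awayBalls x) B then C.ctr h.choose else x

theorem parent_eq_ctr (hB : IsLeast (C.awayBalls x) B) : C.parent x = C.ctr B := by
  have h : ∃ B, IsLeast (C.awayBalls x) B := ⟨B, hB⟩
  rw [parent, dif_pos h, h.choose_spec.unique hB]

theorem parent_ne_and_mem (hB : B ∈ C.awayBalls x) : C.parent x ≠ x ∧ C.parent x ∈ B := by
  obtain ⟨Bmin, hBmin⟩ := C.exists_isLeast_awayBalls ⟨B, hB⟩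
  rw [C.parent_eq_ctr hBmin]
  exact ⟨hBmin.1.2.2, hBmin.2 hB (C.isCenterOf_ctr hBmin.1.1).1⟩

theorem exists_ctr_eq_parent (h : C.parent x ≠ x) : ∃ B ∈ C.awayBalls x, C.ctr B = C.parent x := by
  by_cases hB : ∃ B, IsLeast (C.awayBalls x) B
  · exact ⟨hB.choose, hB.choose_spec.1, (C.parent_eq_ctr hB.choose_spec).symm⟩
  · exact absurd (dif_neg hB) h

theorem awayBalls_parent_ssubset (h : C.parent x ≠ x) :
    C.awayBalls (C.parent x) ⊂ C.awayBalls x := by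
  obtain ⟨B, hB, hctr⟩ := C.exists_ctr_eq_parent h
  have hpB : C.parent x ∈ B := hctr ▸ (C.isCenterOf_ctr hB.1).1
  refine ⟨fun B' hB' => ?_, fun hsub => (hsub hB).2.2 hctr⟩
  · rcases hB.1.subset_or_subset C.ultrametric hB'.1 hpB hB'.2.1 with hBB' | hB'B
    · exact C.mem_awayBalls_of_subset hB hB'.1 hBB'
    · exact absurd hctr (C.mem_awayBalls_of_subset hB' hB.1 hB'B).2.2

noncomputable def tree : SimpleGraph X := SimpleGraph.parentGraph C.parent

theorem tree_isAcyclic : C.tree.IsAcyclic :=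
  SimpleGraph.isAcyclic_parentGraph C.awayBalls fun _ => C.awayBalls_parent_ssubset

theorem exists_walk_ctr (hB : IsOpenBallOf d B) (hx : x ∈ B) :
    ∃ w : C.tree.Walk x (C.ctr B), ∀ z ∈ w.support, z ∈ B :=
  SimpleGraph.exists_walk_parentGraph C.awayBalls (fun _ => C.awayBalls_parent_ssubset)
    (C.locallyFinite B hB) (fun _ hy hyc => C.parent_ne_and_mem ⟨hB, hy, Ne.symm hyc⟩) hx

theorem exists_walk_dist_le (u v : X) :
    ∃ w : C.tree.Walk u v, ∀ z ∈ w.support, d u z ≤ d u v := by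
  have hB := isOpenBallOf_setOf_dist_le C.locallyFinite u (C.ultrametric.nonneg u v)
  have hu : d u u ≤ d u v := C.ultrametric.self_eq_zero u ▸ C.ultrametric.nonneg u v
  obtain ⟨wu, hwu⟩ := C.exists_walk_ctr hB hu
  obtain ⟨wv, hwv⟩ := C.exists_walk_ctr hB (le_refl (d u v))
  refine ⟨wu.append wv.reverse, fun z hz => ?_⟩
  rw [SimpleGraph.Walk.support_append, SimpleGraph.Walk.support_reverse] at hz
  rcases List.mem_append.1 hz with hz | hz
  · exact hwu z hz
  · exact hwv z (List.mem_reverse.1 (List.mem_of_mem_tail hz))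

theorem tree_isTree [Nonempty X] : C.tree.IsTree :=
  ⟨(SimpleGraph.connected_iff _).2 ⟨fun u v => (C.exists_walk_dist_le u v).choose.reachable,
    inferInstance⟩, C.tree_isAcyclic⟩

theorem dist_parent_le (h : C.parent x ≠ x) : d x (C.parent x) ≤ nearestDist d (C.parent x) := by
  obtain ⟨B, hB, hctr⟩ := C.exists_ctr_eq_parent h
  rw [← hctr]
  exact (C.isCenterOf_ctr hB.1).dist_le_nearestDist C.ultrametric C.locallyFinite hB.1 hB.2.1
    (Ne.symm hB.2.2)

theorem dist_le_of_tree_adj {x y : X} (h : C.tree.Adj x y) :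
    d x y ≤ max (nearestDist d x) (nearestDist d y) := by
  obtain ⟨hxy, rfl | rfl⟩ := (SimpleGraph.fromRel_adj _ _ _).1 h
  · exact (C.dist_parent_le (Ne.symm hxy)).trans (le_max_right _ _)
  · rw [C.ultrametric.symm]
    exact (C.dist_parent_le hxy).trans (le_max_left _ _)

theorem generatedBy [Nonempty X] : GeneratedBy d C.tree (nearestDist d) :=
  generatedBy_of_forall_exists_walk C.ultrametric C.tree_isTree
    (nearestDist_nonneg C.ultrametric) (fun _ _ => nearestDist_le C.ultrametric)
    (fun _ _ => C.dist_le_of_tree_adj) C.exists_walk_dist_le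

end CenterChoice

theorem isUGVL_of_forall_exists_isCenterOf {X : Type*} [Nonempty X] {d : X → X → ℝ}
    (hd : IsUltrametricOn d) (hlf : IsLocallyFiniteOn d)
    (h : ∀ B, IsOpenBallOf d B → ∃ c, IsCenterOf d B c) : IsUGVL d := by
  have hctr : ∀ B, ∃ c, IsOpenBallOf d B → IsCenterOf d B c := fun B => by
    by_cases hB : IsOpenBallOf d B
    · obtain ⟨c, hc⟩ := h B hB
      exact ⟨c, fun _ => hc⟩
    · exact ⟨Classical.arbitrary X, fun h => absurd h hB⟩
  choose ctr hctr using hctr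
  exact ⟨_, _, (CenterChoice.mk hd hlf ctr hctr).generatedBy⟩

/-- For a nonempty locally finite ultrametric space `(X, d)` the following are
equivalent: (1) `(X, d) ∈ UGVL`; (2) every open ball is a centered sphere; (3) every
open ball `B` with at least two points has a point `c ∈ B` with `d x c = diam B` for
all `x ∈ B` with `x ≠ c`. -/
theorem stmt_14 {X : Type*} (hne : Nonempty X)
    (d : X → X → ℝ) (hd : IsUltrametricOn d) (hlf : IsLocallyFiniteOn d) :
    (IsUGVL d ↔ ∀ B : Set X, IsOpenBallOf d B → IsCenteredSphereOf d B) ∧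
    ((∀ B : Set X, IsOpenBallOf d B → IsCenteredSphereOf d B) ↔
      (∀ B : Set X, IsOpenBallOf d B → (∃ a ∈ B, ∃ b ∈ B, a ≠ b) →
        ∃ c ∈ B, ∀ x ∈ B, x ≠ c → d x c = setDiam d B)) := by
  have sphere_of_center
      (h : ∀ B, IsOpenBallOf d B → (∃ a ∈ B, ∃ b ∈ B, a ≠ b) → ∃ c, IsCenterOf d B c)
      (B : Set X) (hB : IsOpenBallOf d B) : IsCenteredSphereOf d B :=
    let ⟨_, hc⟩ := hB.exists_isCenterOf hd (h B hB)
    hc.isCenteredSphereOf hd hlf hB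
  have center_of_sphere (h : ∀ B, IsOpenBallOf d B → IsCenteredSphereOf d B) (B : Set X)
      (hB : IsOpenBallOf d B) (htwo : ∃ a ∈ B, ∃ b ∈ B, a ≠ b) : ∃ c, IsCenterOf d B c :=
    (h B hB).exists_isCenterOf hd hlf hB htwo
  refine ⟨⟨fun ⟨_, _, hG⟩ => sphere_of_center fun B hB => hG.exists_isCenterOf hd hlf hB,
    fun h => isUGVL_of_forall_exists_isCenterOf hd hlf fun B hB =>
      hB.exists_isCenterOf hd (center_of_sphere h B hB)⟩, center_of_sphere, sphere_of_center⟩
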